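/- Let Ω be an arbitrary open set in ℝⁿ and (Ω_k^□)_{k∈ℕ} its dyadic approximations. For every point x in the boundary of Ω_k^□, the distance from x to the boundary of Ω is at most √n · 2^{-k}. -/

import Mathlib

/-!
If a boundary point `x` of `Ω_k^□` were farther than `√n · 2^{-k}` from `∂Ω`, every grid cube
containing `x` would be a connected set of diameter `√n · 2^{-k}` missing `∂Ω`, hence would lie in
the component `C m` of `x`. Adding all these cubes to the approximation `A m k` containing `x`
keeps it drawn on the grid, rooted and inside `C m`, and its interior stays connected because
their union is a neighbourhood of `x ∈ closure (interior (A m k))`. By maximality the cubes already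
belong to `A m k`, so `x` would be an interior point of `Ω_k^□`.
-/

open Set Filter Topology

noncomputable section

/-- The closed dyadic cube of order `k` indexed by `j ∈ ℤⁿ`. -/
def dyadicCube (n k : ℕ) (j : Fin n → ℤ) : Set (EuclideanSpace ℝ (Fin n)) :=
  {x | ∀ m : Fin n, (j m : ℝ) / 2 ^ k ≤ x m ∧ x m ≤ ((j m : ℝ) + 1) / 2 ^ k}

/-- A set is drawn on the dyadic grid `Π_k` if it is a union of cubes of that grid. -/
def DrawnOn (n k : ℕ) (Q : Set (EuclideanSpace ℝ (Fin n))) : Prop :=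
  ∃ 𝒬 : Set (Fin n → ℤ), Q = ⋃ j ∈ 𝒬, dyadicCube n k j

/-- `A` is the maximal set drawn on the dyadic grid of order `k`, rooted in `π₀`,
contained in `C`, with connected interior. -/
def IsMaxDyadicApprox (n k : ℕ) (π₀ C A : Set (EuclideanSpace ℝ (Fin n))) : Prop :=
  DrawnOn n k A ∧ π₀ ⊆ A ∧ A ⊆ C ∧ IsConnected (interior A) ∧
    ∀ B : Set (EuclideanSpace ℝ (Fin n)),
      DrawnOn n k B → π₀ ⊆ B → B ⊆ C → IsConnected (interior B) → B ⊆ A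

theorem IsPreconnected.subset_of_disjoint_frontier {X : Type*} [TopologicalSpace X]
    {s t : Set X} (hs : IsPreconnected s) (hst : (s ∩ t).Nonempty)
    (hfr : Disjoint s (frontier t)) : s ⊆ t := by
  have hcover : s ⊆ interior t ∪ (closure t)ᶜ := fun y hy => by
    by_contra h
    simp only [mem_union, mem_compl_iff, not_or, not_not] at h
    exact hfr.notMem_of_mem_left hy ⟨h.2, h.1⟩
  obtain ⟨p, hps, hpt⟩ := hst
  have hpint : p ∈ interior t := by
    by_contra h
    exact hfr.notMem_of_mem_left hps ⟨subset_closure hpt, h⟩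
  exact (hs.subset_left_of_subset_union isOpen_interior isClosed_closure.isOpen_compl
    (disjoint_compl_right.mono_left interior_subset_closure) hcover ⟨p, hps, hpint⟩).trans
    interior_subset

theorem mem_Icc_intCast_iff {t : ℝ} {j : ℤ} :
    t ∈ Icc (j : ℝ) (j + 1) ↔ ⌈t⌉ - 1 ≤ j ∧ j ≤ ⌊t⌋ := by
  rw [mem_Icc, Int.le_floor, sub_le_iff_le_add, Int.ceil_le, and_comm]
  push_cast
  rfl

theorem mem_Icc_of_mem_Ioo_ceil_floor {s t : ℝ} {j : ℤ}
    (hs : s ∈ Ioo ((⌈t⌉ : ℝ) - 1) (⌊t⌋ + 1)) (hj : s ∈ Icc (j : ℝ) (j + 1)) :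
    t ∈ Icc (j : ℝ) (j + 1) := by
  have hceil : ((⌈t⌉ - 1 : ℤ) : ℝ) < j + 1 := by push_cast; linarith [hs.1, hj.2]
  have hfloor : (j : ℝ) < ⌊t⌋ + 1 := by linarith [hs.2, hj.1]
  exact mem_Icc_intCast_iff.2 ⟨Int.lt_add_one_iff.1 (by exact_mod_cast hceil),
    Int.lt_add_one_iff.1 (by exact_mod_cast hfloor)⟩

theorem Ioo_subset_Ioo_ceil_floor {t : ℝ} {j : ℤ} (ht : t ∈ Icc (j : ℝ) (j + 1)) :
    Ioo (j : ℝ) (j + 1) ⊆ Ioo ((⌈t⌉ : ℝ) - 1) (⌊t⌋ + 1) := by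
  obtain ⟨hceil, hfloor⟩ := mem_Icc_intCast_iff.1 ht
  apply Ioo_subset_Ioo
  · exact_mod_cast hceil
  · exact_mod_cast Int.add_le_add_right hfloor 1

section DyadicGrid

variable {n k : ℕ}

def dyadicScale (n k : ℕ) : EuclideanSpace ℝ (Fin n) ≃ₜ (Fin n → ℝ) :=
  (EuclideanSpace.equiv (Fin n) ℝ).toHomeomorph.trans
    (Homeomorph.smulOfNeZero ((2 : ℝ) ^ k) (by positivity))

@[simp]
theorem dyadicScale_apply (z : EuclideanSpace ℝ (Fin n)) (m : Fin n) :
    dyadicScale n k z m = 2 ^ k * z m :=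
  rfl

theorem dyadicCube_eq_preimage (j : Fin n → ℤ) :
    dyadicCube n k j = dyadicScale n k ⁻¹' univ.pi fun m => Icc (j m : ℝ) (j m + 1) := by
  ext z
  have h2k : (0 : ℝ) < 2 ^ k := by positivity
  simp only [dyadicCube, mem_ofPred_eq, mem_preimage, mem_univ_pi, mem_Icc, dyadicScale_apply,
    div_le_iff₀ h2k, le_div_iff₀ h2k, mul_comm _ ((2 : ℝ) ^ k)]

def dyadicOpenCube (n k : ℕ) (j : Fin n → ℤ) : Set (EuclideanSpace ℝ (Fin n)) :=
  dyadicScale n k ⁻¹' univ.pi fun m => Ioo (j m : ℝ) (j m + 1)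

theorem isOpen_dyadicOpenCube (j : Fin n → ℤ) : IsOpen (dyadicOpenCube n k j) :=
  (isOpen_set_pi finite_univ fun _ _ => isOpen_Ioo).preimage (dyadicScale n k).continuous

theorem dyadicOpenCube_subset_dyadicCube (j : Fin n → ℤ) :
    dyadicOpenCube n k j ⊆ dyadicCube n k j := by
  rw [dyadicCube_eq_preimage]
  exact preimage_mono (pi_mono fun _ _ => Ioo_subset_Icc_self)

theorem dyadicCube_subset_closure_dyadicOpenCube (j : Fin n → ℤ) :
    dyadicCube n k j ⊆ closure (dyadicOpenCube n k j) := by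
  rw [dyadicOpenCube, ← Homeomorph.preimage_closure, closure_pi_set, dyadicCube_eq_preimage]
  refine preimage_mono (pi_mono fun m _ => ?_)
  rw [closure_Ioo (by linarith)]

theorem isPreconnected_dyadicCube (j : Fin n → ℤ) : IsPreconnected (dyadicCube n k j) := by
  rw [dyadicCube_eq_preimage, Homeomorph.isPreconnected_preimage]
  exact isPreconnected_univ_pi fun _ => isPreconnected_Icc

theorem mem_dyadicCube_floor (z : EuclideanSpace ℝ (Fin n)) :
    z ∈ dyadicCube n k fun m => ⌊dyadicScale n k z m⌋ := by
  rw [dyadicCube_eq_preimage]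
  exact fun m _ => ⟨Int.floor_le _, (Int.lt_floor_add_one _).le⟩

theorem dist_le_of_mem_dyadicCube {j : Fin n → ℤ} {x y : EuclideanSpace ℝ (Fin n)}
    (hx : x ∈ dyadicCube n k j) (hy : y ∈ dyadicCube n k j) :
    dist x y ≤ √n / 2 ^ k := by
  have hcoord : ∀ m, dist (x m) (y m) ≤ 1 / 2 ^ k := fun m => by
    obtain ⟨hx₁, hx₂⟩ := hx m
    obtain ⟨hy₁, hy₂⟩ := hy m
    have hlen : ((j m : ℝ) + 1) / 2 ^ k = j m / 2 ^ k + 1 / 2 ^ k := add_div _ _ _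
    rw [Real.dist_eq, abs_le]
    constructor <;> linarith
  calc dist x y = √(∑ m, dist (x m) (y m) ^ 2) := EuclideanSpace.dist_eq x y
    _ ≤ √(∑ _m : Fin n, (1 / 2 ^ k : ℝ) ^ 2) := by gcongr with m; exact hcoord m
    _ = √n / 2 ^ k := by
      rw [Finset.sum_const, Finset.card_univ, Fintype.card_fin, nsmul_eq_mul,
        Real.sqrt_mul (Nat.cast_nonneg n), Real.sqrt_sq (by positivity), mul_one_div]

def dyadicStar (n k : ℕ) (x : EuclideanSpace ℝ (Fin n)) : Set (EuclideanSpace ℝ (Fin n)) :=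
  ⋃ j ∈ {j | x ∈ dyadicCube n k j}, dyadicCube n k j

/-- An open box around `x` meeting exactly the grid cubes that contain `x`. -/
def dyadicNhd (n k : ℕ) (x : EuclideanSpace ℝ (Fin n)) : Set (EuclideanSpace ℝ (Fin n)) :=
  dyadicScale n k ⁻¹'
    univ.pi fun m => Ioo ((⌈dyadicScale n k x m⌉ : ℝ) - 1) (⌊dyadicScale n k x m⌋ + 1)

theorem isOpen_dyadicNhd (x : EuclideanSpace ℝ (Fin n)) : IsOpen (dyadicNhd n k x) :=
  (isOpen_set_pi finite_univ fun _ _ => isOpen_Ioo).preimage (dyadicScale n k).continuous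

theorem mem_dyadicNhd_self (x : EuclideanSpace ℝ (Fin n)) : x ∈ dyadicNhd n k x :=
  fun m _ => ⟨by linarith [Int.ceil_lt_add_one (dyadicScale n k x m)],
    Int.lt_floor_add_one _⟩

theorem isConnected_dyadicNhd (x : EuclideanSpace ℝ (Fin n)) : IsConnected (dyadicNhd n k x) := by
  rw [dyadicNhd, Homeomorph.isConnected_preimage, isConnected_univ_pi]
  intro m
  have := Int.ceil_lt_add_one (dyadicScale n k x m)
  have := Int.lt_floor_add_one (dyadicScale n k x m)
  exact isConnected_Ioo (by linarith)

theorem mem_dyadicCube_of_mem_dyadicNhd {x z : EuclideanSpace ℝ (Fin n)} {j : Fin n → ℤ}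
    (hz : z ∈ dyadicNhd n k x) (hzj : z ∈ dyadicCube n k j) : x ∈ dyadicCube n k j := by
  rw [dyadicCube_eq_preimage] at hzj ⊢
  exact fun m _ => mem_Icc_of_mem_Ioo_ceil_floor (hz m trivial) (hzj m trivial)

theorem dyadicNhd_subset_dyadicStar (x : EuclideanSpace ℝ (Fin n)) :
    dyadicNhd n k x ⊆ dyadicStar n k x := fun z hz =>
  mem_biUnion (mem_dyadicCube_of_mem_dyadicNhd hz (mem_dyadicCube_floor z))
    (mem_dyadicCube_floor z)

theorem dyadicStar_subset_closure_dyadicNhd (x : EuclideanSpace ℝ (Fin n)) :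
    dyadicStar n k x ⊆ closure (dyadicNhd n k x) := by
  refine iUnion₂_subset fun j (hxj : x ∈ dyadicCube n k j) => ?_
  refine (dyadicCube_subset_closure_dyadicOpenCube j).trans (closure_mono ?_)
  rw [dyadicCube_eq_preimage] at hxj
  exact preimage_mono (pi_mono fun m _ => Ioo_subset_Ioo_ceil_floor (hxj m trivial))

end DyadicGrid

section DrawnOn

variable {n k : ℕ}

theorem DrawnOn.iUnion {ι : Sort*} {S : ι → Set (EuclideanSpace ℝ (Fin n))}
    (h : ∀ i, DrawnOn n k (S i)) : DrawnOn n k (⋃ i, S i) := by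
  choose 𝒬 h𝒬 using h
  exact ⟨⋃ i, 𝒬 i, by simp_rw [h𝒬, biUnion_iUnion]⟩

theorem DrawnOn.union {S T : Set (EuclideanSpace ℝ (Fin n))} (hS : DrawnOn n k S)
    (hT : DrawnOn n k T) : DrawnOn n k (S ∪ T) := by
  rw [union_eq_iUnion]
  exact DrawnOn.iUnion (Bool.forall_bool.2 ⟨hT, hS⟩)

theorem drawnOn_dyadicStar (x : EuclideanSpace ℝ (Fin n)) : DrawnOn n k (dyadicStar n k x) :=
  ⟨_, rfl⟩

theorem DrawnOn.isClosed {S : Set (EuclideanSpace ℝ (Fin n))} (h : DrawnOn n k S) :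
    IsClosed S := by
  obtain ⟨𝒬, rfl⟩ := h
  refine isClosed_of_closure_subset fun y hy => ?_
  obtain ⟨z, hzy, hz⟩ := mem_closure_iff.1 hy _ (isOpen_dyadicNhd y) (mem_dyadicNhd_self y)
  obtain ⟨j, hj, hzj⟩ := mem_iUnion₂.1 hz
  exact mem_biUnion hj (mem_dyadicCube_of_mem_dyadicNhd hzy hzj)

theorem DrawnOn.subset_closure_interior {S : Set (EuclideanSpace ℝ (Fin n))}
    (h : DrawnOn n k S) : S ⊆ closure (interior S) := by
  obtain ⟨𝒬, rfl⟩ := h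
  refine iUnion₂_subset fun j hj => (dyadicCube_subset_closure_dyadicOpenCube j).trans ?_
  exact closure_mono (interior_maximal ((dyadicOpenCube_subset_dyadicCube j).trans
    (subset_biUnion_of_mem hj)) (isOpen_dyadicOpenCube j))

theorem DrawnOn.isConnected_interior_union_dyadicStar {A : Set (EuclideanSpace ℝ (Fin n))}
    (hA : DrawnOn n k A) (hconn : IsConnected (interior A)) {x : EuclideanSpace ℝ (Fin n)}
    (hx : x ∈ A) : IsConnected (interior (A ∪ dyadicStar n k x)) := by
  have hmeet : (interior A ∩ dyadicNhd n k x).Nonempty :=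
    (mem_closure_iff.1 (hA.subset_closure_interior hx) _ (isOpen_dyadicNhd x)
      (mem_dyadicNhd_self x)).imp fun _ h => h.symm
  refine (hconn.union hmeet (isConnected_dyadicNhd x)).subset_closure ?_ ?_
  · exact union_subset (interior_mono subset_union_left) (interior_maximal
      ((dyadicNhd_subset_dyadicStar x).trans subset_union_right) (isOpen_dyadicNhd x))
  · refine interior_subset.trans (union_subset ?_ ?_)
    · exact hA.subset_closure_interior.trans (closure_mono subset_union_left)
    · exact (dyadicStar_subset_closure_dyadicNhd x).trans (closure_mono subset_union_right)

end DrawnOn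

theorem dyadicStar_subset_connectedComponentIn {n k : ℕ} {Ω : Set (EuclideanSpace ℝ (Fin n))}
    {x : EuclideanSpace ℝ (Fin n)} (hx : x ∈ Ω)
    (hfar : √n / 2 ^ k < Metric.infDist x (frontier Ω)) :
    dyadicStar n k x ⊆ connectedComponentIn Ω x := by
  refine iUnion₂_subset fun j (hxj : x ∈ dyadicCube n k j) => ?_
  have hfr : Disjoint (dyadicCube n k j) (frontier Ω) := disjoint_left.2 fun y hy hyfr =>
    (Metric.infDist_le_dist_of_mem hyfr).not_gt
      ((dist_le_of_mem_dyadicCube hxj hy).trans_lt hfar)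
  have hsub := (isPreconnected_dyadicCube j).subset_of_disjoint_frontier ⟨x, hxj, hx⟩ hfr
  exact (isPreconnected_dyadicCube j).subset_connectedComponentIn hxj hsub

theorem IsMaxDyadicApprox.dyadicStar_subset {n k : ℕ} {π₀ C A : Set (EuclideanSpace ℝ (Fin n))}
    (h : IsMaxDyadicApprox n k π₀ C A) {x : EuclideanSpace ℝ (Fin n)} (hx : x ∈ A)
    (hstar : dyadicStar n k x ⊆ C) : dyadicStar n k x ⊆ A := by
  obtain ⟨hdrawn, hroot, hAC, hconn, hmax⟩ := h
  have hB := hmax (A ∪ dyadicStar n k x) (hdrawn.union (drawnOn_dyadicStar x))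
    (hroot.trans subset_union_left) (union_subset hAC hstar)
    (hdrawn.isConnected_interior_union_dyadicStar hconn hx)
  exact subset_union_right.trans hB

theorem stmt2_general {n : ℕ} {M : Type*} (Ω : Set (EuclideanSpace ℝ (Fin n)))
    (C : M → Set (EuclideanSpace ℝ (Fin n)))
    (hcomp : ∀ m, ∃ x ∈ Ω, C m = connectedComponentIn Ω x)
    (km : M → ℕ) (π : M → Fin n → ℤ)
    (A : M → ℕ → Set (EuclideanSpace ℝ (Fin n)))
    (hA : ∀ m k, km m ≤ k →
      IsMaxDyadicApprox n k (dyadicCube n (km m) (π m)) (C m) (A m k))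
    (Ωsq : ℕ → Set (EuclideanSpace ℝ (Fin n)))
    (hΩsq : ∀ k, Ωsq k = interior (⋃ m, ⋃ (_ : km m ≤ k), A m k)) :
    ∀ k, ∀ x ∈ frontier (Ωsq k), Metric.infDist x (frontier Ω) ≤ Real.sqrt n / 2 ^ k := by
  intro k x hx
  set S := ⋃ m, ⋃ (_ : km m ≤ k), A m k
  have hS : DrawnOn n k S := DrawnOn.iUnion fun m => DrawnOn.iUnion fun hm => (hA m k hm).1
  have hxS : x ∈ S := by
    rw [hΩsq] at hx
    exact hS.isClosed.closure_subset_iff.2 interior_subset (frontier_subset_closure hx)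
  obtain ⟨m, hmk, hxA⟩ := mem_iUnion₂.1 hxS
  obtain ⟨x₀, -, hC⟩ := hcomp m
  have hxC : x ∈ connectedComponentIn Ω x₀ := hC ▸ (hA m k hmk).2.2.1 hxA
  rw [connectedComponentIn_eq hxC] at hC
  by_contra! hfar
  have hstar : dyadicStar n k x ⊆ A m k := (hA m k hmk).dyadicStar_subset hxA
    (hC ▸ dyadicStar_subset_connectedComponentIn (connectedComponentIn_subset _ _ hxC) hfar)
  have hAS : A m k ⊆ S := subset_iUnion₂ (s := fun m _ => A m k) m hmk
  have hxint : x ∈ interior S := mem_interior.2 ⟨dyadicNhd n k x,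
    (dyadicNhd_subset_dyadicStar x).trans (hstar.trans hAS), isOpen_dyadicNhd x,
    mem_dyadicNhd_self x⟩
  rw [hΩsq, frontier, interior_interior] at hx
  exact hx.2 hxint

/-- Every point of the boundary of the dyadic approximation `Ω_k^□` is within
distance `√n · 2^{-k}` of the boundary of `Ω`. -/
theorem stmt2 {n : ℕ} {M : Type*} (Ω : Set (EuclideanSpace ℝ (Fin n))) (hΩ : IsOpen Ω)
    (C : M → Set (EuclideanSpace ℝ (Fin n)))
    (hcomp : ∀ m, ∃ x ∈ Ω, C m = connectedComponentIn Ω x)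
    (hcover : ∀ x ∈ Ω, ∃ m, x ∈ C m)
    (km : M → ℕ) (π : M → Fin n → ℤ)
    (hroot : ∀ m, dyadicCube n (km m) (π m) ⊆ C m)
    (A : M → ℕ → Set (EuclideanSpace ℝ (Fin n)))
    (hA : ∀ m k, km m ≤ k →
      IsMaxDyadicApprox n k (dyadicCube n (km m) (π m)) (C m) (A m k))
    (Ωsq : ℕ → Set (EuclideanSpace ℝ (Fin n)))
    (hΩsq : ∀ k, Ωsq k = interior (⋃ m, ⋃ (_ : km m ≤ k), A m k)) :
    ∀ k, ∀ x ∈ frontier (Ωsq k), Metric.infDist x (frontier Ω) ≤ Real.sqrt n / 2 ^ k :=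
  stmt2_general Ω C hcomp km π A hA Ωsq hΩsq

end
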